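/- arXiv:1810.13077 — 2 statements merged into one kernel-verified Lean document; each statement's English description precedes it below -/
import Mathlib

section
/- If G is a dense, F_5-free 3-graph that contains a copy of the complete 3-graph K_4^3 on 4 vertices, then λ(G) ≤ 1/16. -/
open Finset

/-- An `r`-graph: a finite vertex set together with a finite set of edges,
each edge being a subset of the vertex set. (Uniformity is a separate predicate.) -/
structure HyperGraph where
  verts : Finset ℕ
  edges : Finset (Finset ℕ)
  edge_sub : ∀ e ∈ edges, e ⊆ verts

namespace HyperGraph

/-- `G` is `r`-uniform: every edge has `r` vertices. -/
def IsUniform (G : HyperGraph) (r : ℕ) : Prop := ∀ e ∈ G.edges, e.card = r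

def IsSubgraph (H G : HyperGraph) : Prop := H.verts ⊆ G.verts ∧ H.edges ⊆ G.edges

def IsProperSubgraph (H G : HyperGraph) : Prop := H.IsSubgraph G ∧ H ≠ G

/-- `G` contains a subgraph isomorphic to `F` (an injective copy of `F`). -/
def HasCopy (G F : HyperGraph) : Prop :=
  ∃ f : ℕ → ℕ, Set.InjOn f ↑F.verts ∧ (∀ v ∈ F.verts, f v ∈ G.verts) ∧
    ∀ e ∈ F.edges, e.image f ∈ G.edges

/-- `G` is `F`-free: it contains no subgraph isomorphic to `F`. -/
def Free (G F : HyperGraph) : Prop := ¬ G.HasCopy F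

/-- A feasible weight vector: nonnegative weights summing to 1 over the vertex set. -/
def IsWeighting (G : HyperGraph) (w : ℕ → ℝ) : Prop :=
  (∀ i, 0 ≤ w i) ∧ ∑ i ∈ G.verts, w i = 1

/-- The Lagrangian polynomial `λ(G, w) = Σ_{e ∈ E(G)} Π_{i ∈ e} w i`. -/
def lagrangianAt (G : HyperGraph) (w : ℕ → ℝ) : ℝ := ∑ e ∈ G.edges, ∏ i ∈ e, w i

/-- The Lagrangian `λ(G)`: the maximum of `λ(G, w)` over feasible weight vectors. -/
noncomputable def lagrangian (G : HyperGraph) : ℝ :=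
  sSup {x : ℝ | ∃ w : ℕ → ℝ, G.IsWeighting w ∧ x = G.lagrangianAt w}

/-- `G` is dense: every proper subgraph has strictly smaller Lagrangian. -/
def IsDense (G : HyperGraph) : Prop :=
  ∀ H : HyperGraph, H.IsProperSubgraph G → H.lagrangian < G.lagrangian

/-- The Lagrangian density `π_λ(F) = sup { r! · λ(G) : G an F-free r-graph }`. -/
noncomputable def lagrangianDensity (r : ℕ) (F : HyperGraph) : ℝ :=
  sSup {x : ℝ | ∃ G : HyperGraph, G.IsUniform r ∧ G.Free F ∧
    x = (r.factorial : ℝ) * G.lagrangian}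

/-- The subgraph of `G` induced by `A`. -/
def induce (G : HyperGraph) (A : Finset ℕ) : HyperGraph where
  verts := A
  edges := G.edges.filter (fun e => e ⊆ A)
  edge_sub := fun _ he => (Finset.mem_filter.mp he).2

/-- The link `N(a,b) = { c : {a,b,c} ∈ E(G) }`. -/
def link2 (G : HyperGraph) (a b : ℕ) : Set ℕ := {c | ({a, b, c} : Finset ℕ) ∈ G.edges}

/-- `{a, b}` is a good pair to `A`. -/
def IsGoodPair (G : HyperGraph) (A : Finset ℕ) (a b : ℕ) : Prop :=
  a ≠ b ∧ a ∈ G.verts ∧ b ∈ G.verts ∧ a ∉ A ∧ b ∉ A ∧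
    ∀ k ∈ A, G.link2 a k = {b} ∧ G.link2 b k = {a}

/-- The pairs `{a 1, b 1}, …, {a s, b s}` are good pairs to `A`
partitioning `V(G) ∖ A`. -/
def GoodPartition (G : HyperGraph) (A : Finset ℕ) (s : ℕ) (a b : ℕ → ℕ) : Prop :=
  A ⊆ G.verts ∧
  (∀ v, v ∈ G.verts \ A ↔ ∃ i ∈ Finset.Icc 1 s, v = a i ∨ v = b i) ∧
  (∀ i ∈ Finset.Icc 1 s, ∀ j ∈ Finset.Icc 1 s, i ≠ j →
    ({a i, b i} : Finset ℕ) ∩ {a j, b j} = ∅) ∧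
  (∀ i ∈ Finset.Icc 1 s, G.IsGoodPair A (a i) (b i))

/-- `G` is a good graph to `A`. -/
def IsGoodGraph (G : HyperGraph) (A : Finset ℕ) : Prop := ∃ s a b, G.GoodPartition A s a b

end HyperGraph

open HyperGraph

/-- The complete `r`-graph `K_t^r` on `t` vertices. -/
def completeHyperGraph (t r : ℕ) : HyperGraph where
  verts := Finset.Icc 1 t
  edges := (Finset.Icc 1 t).powersetCard r
  edge_sub := fun _ he => (Finset.mem_powersetCard.mp he).1

/-- `K_t^{3-}`: the complete 3-graph on `t` vertices with one edge removed. -/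
def completeMinus (t : ℕ) : HyperGraph where
  verts := Finset.Icc 1 t
  edges := ((Finset.Icc 1 t).powersetCard 3).filter (fun e => e ≠ ({1,2,3} : Finset ℕ))
  edge_sub := fun _ he => (Finset.mem_powersetCard.mp (Finset.mem_filter.mp he).1).1

/-- The generalized triangle `F_5 = {123, 124, 345}`. -/
def F5 : HyperGraph where
  verts := {1,2,3,4,5}
  edges := {{1,2,3},{1,2,4},{3,4,5}}
  edge_sub := by decide

/-- The 3-uniform linear cycle of length 3: `C_3^3 = {123, 345, 561}`. -/
def C33 : HyperGraph where
  verts := {1,2,3,4,5,6}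
  edges := {{1,2,3},{3,4,5},{5,6,1}}
  edge_sub := by decide

open scoped Classical in
/-- The 3-uniform linear cycle `C_t^3` of length `t`, with vertex set `[2t]` and
edges `{123, 345, …, (2t-3)(2t-2)(2t-1), (2t-1)(2t)1}`. -/
noncomputable def linearCycle (t : ℕ) : HyperGraph where
  verts := Finset.Icc 1 (2*t)
  edges := ((Finset.Icc 1 (2*t)).powersetCard 3).filter
    (fun e => (∃ k < t - 1, e = ({2*k+1, 2*k+2, 2*k+3} : Finset ℕ)) ∨
      e = ({2*t-1, 2*t, 1} : Finset ℕ))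
  edge_sub := fun _ he => (Finset.mem_powersetCard.mp (Finset.mem_filter.mp he).1).1

/-- The 3-graph `S_{2,t}` with vertex set `[t+2]` and edges `{12k : 3 ≤ k ≤ t+2}`. -/
def S2 (t : ℕ) : HyperGraph where
  verts := Finset.Icc 1 (t+2)
  edges := (Finset.Icc 3 (t+2)).image (fun k => ({1,2,k} : Finset ℕ))
  edge_sub := by
    intro e he
    simp only [Finset.mem_image] at he
    obtain ⟨k, hk, rfl⟩ := he
    simp only [Finset.mem_Icc] at hk
    intro x hx
    simp only [Finset.mem_insert, Finset.mem_singleton] at hx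
    simp only [Finset.mem_Icc]
    rcases hx with rfl | rfl | rfl <;> omega

/-- `F` is (up to relabeling) the disjoint union `G ⊔ H`. -/
def IsDisjointUnion (F G H : HyperGraph) : Prop :=
  ∃ f g : ℕ → ℕ, Set.InjOn f ↑G.verts ∧ Set.InjOn g ↑H.verts ∧
    Disjoint (G.verts.image f) (H.verts.image g) ∧
    F.verts = G.verts.image f ∪ H.verts.image g ∧
    F.edges = G.edges.image (fun e => e.image f) ∪ H.edges.image (fun e => e.image g)

/-- An `r`-graph `H` on `t` vertices is perfect if `π_λ(H) = r! · λ(K_{t-1}^r)`. -/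
def IsPerfect (r : ℕ) (H : HyperGraph) : Prop :=
  lagrangianDensity r H =
    (r.factorial : ℝ) * (completeHyperGraph (H.verts.card - 1) r).lagrangian

/-- The Turán number `ex(n, F)` for `r`-graphs on `n` vertices. -/
noncomputable def exNum (n r : ℕ) (F : HyperGraph) : ℕ :=
  sSup {m : ℕ | ∃ G : HyperGraph, G.IsUniform r ∧ G.verts.card = n ∧ G.Free F ∧
    m = G.edges.card}

/-- The defining property of an edge of `O_s`. -/
def OsPred (s : ℕ) (e : Finset ℕ) : Prop :=
  ∃ i ∈ Finset.Icc 1 s, ∃ j ∈ Finset.Icc 1 s, i ≠ j ∧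
    (e = ({2*i-1, 2*i, 2*j-1} : Finset ℕ) ∨ e = ({2*i-1, 2*i, 2*j} : Finset ℕ))

instance (s : ℕ) : DecidablePred (OsPred s) := fun e => by
  unfold OsPred; infer_instance

/-- The 3-graph `O_s` on vertices `a_i = 2i-1`, `b_i = 2i` (`1 ≤ i ≤ s`) with edges
`a_i b_i a_j` and `a_i b_i b_j` for `i ≠ j`. -/
def Os (s : ℕ) : HyperGraph where
  verts := Finset.Icc 1 (2*s)
  edges := ((Finset.Icc 1 (2*s)).powersetCard 3).filter (OsPred s)
  edge_sub := fun _ he => (Finset.mem_powersetCard.mp (Finset.mem_filter.mp he).1).1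

/-- `s = ⌈r^{r-1} / (2 (r-1)!)⌉`. -/
def sVal (r : ℕ) : ℕ := ⌈(r : ℚ)^(r-1) / (2 * ((r-1).factorial : ℚ))⌉₊

/-- The vertex `a_i`, realized as the natural number `r - 2 + i`. -/
def aVert (r i : ℕ) : ℕ := r - 2 + i

/-- The vertex `m_j`: a fresh vertex distinct from `1, …, r-2, a_1, a_2, a_3`. -/
def mVert (r j : ℕ) : ℕ := r + 1 + j

/-- The edge `e_j = {1, 2, …, r-2, a_1, a_{j+1}}`. -/
def eEdge (r j : ℕ) : Finset ℕ := Finset.Icc 1 (r-2) ∪ {aVert r 1, aVert r (j+1)}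

/-- The edge `{a_2, a_3, 1, …, i, m_1, …, m_{r-i-2}}` (for `i = 0` this is
`{a_2, a_3, m_1, …, m_{r-2}}`). -/
def thirdEdge (r i : ℕ) : Finset ℕ :=
  {aVert r 2, aVert r 3} ∪ Finset.Icc 1 i ∪ (Finset.Icc 1 (r - i - 2)).image (mVert r)

/-- The `r`-graph `F_i^r` with edges `e_1`, `e_2` and the third edge above. -/
def Fgraph (r i : ℕ) : HyperGraph where
  verts := eEdge r 1 ∪ eEdge r 2 ∪ thirdEdge r i
  edges := {eEdge r 1, eEdge r 2, thirdEdge r i}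
  edge_sub := by
    intro e he
    simp only [Finset.mem_insert, Finset.mem_singleton] at he
    rcases he with rfl | rfl | rfl
    · exact Finset.subset_union_left.trans Finset.subset_union_left
    · exact Finset.subset_union_right.trans Finset.subset_union_left
    · exact Finset.subset_union_right

/-!
Take a weighting `w` attaining `λ(G)`. Density forces `w > 0` on `V(G)`, so by the Lagrange
conditions every partial derivative `∂λ(G, w)/∂w_v` equals `3 λ(G)`. Let `A` be the vertex set of
the copy of `K_4^3` and `B = V(G) ∖ A`. As `G` is `F_5`-free, an edge meeting `A` in two vertices
lies inside `A`, and a pair in `B` forms an edge with at most one vertex of `A`. Summing the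
partial derivatives over `A` therefore gives `12 λ(G) ≤ 2 σ₂(w|A) + σ₂(w|B) ≤ 3α²/4 + β²/2`, where
`α + β = 1` are the weights of `A` and `B`, and the right-hand side is at most `3/4`.
-/

namespace Finset

variable {ι : Type*} [DecidableEq ι]

lemma two_mul_sum_powersetCard_two {R : Type*} [CommRing R] (s : Finset ι) (f : ι → R) :
    2 * ∑ p ∈ s.powersetCard 2, ∏ i ∈ p, f i = (∑ i ∈ s, f i) ^ 2 - ∑ i ∈ s, f i ^ 2 := by
  induction s using Finset.induction_on with
  | empty => simp [powersetCard_eq_empty.2 (by simp : #(∅ : Finset ι) < 2)]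
  | insert a s ha ih =>
    have hdisj : Disjoint (s.powersetCard 2) ((s.powersetCard 1).image (insert a)) :=
      disjoint_right.2 fun p hp hp2 => by
        obtain ⟨q, -, rfl⟩ := mem_image.1 hp
        exact ha ((mem_powersetCard.1 hp2).1 (mem_insert_self a q))
    have hinj : Set.InjOn (insert a) (s.powersetCard 1 : Set (Finset ι)) :=
      fun p hp q hq hpq => by
        rw [← erase_insert (fun h => ha ((mem_powersetCard.1 hp).1 h)),
          ← erase_insert (fun h => ha ((mem_powersetCard.1 hq).1 h)), hpq]
    have hlink : ∑ p ∈ (s.powersetCard 1).image (insert a), ∏ i ∈ p, f i = f a * ∑ i ∈ s, f i := by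
      rw [sum_image hinj, powersetCard_one, sum_map, mul_sum]
      refine sum_congr rfl fun i hi => ?_
      exact prod_pair (ne_of_mem_of_not_mem hi ha).symm
    rw [powersetCard_succ_insert ha, sum_union hdisj, mul_add, ih, hlink, sum_insert ha,
      sum_insert ha]
    ring

lemma two_mul_sum_powersetCard_two_le_sq (s : Finset ι) (f : ι → ℝ) :
    2 * ∑ p ∈ s.powersetCard 2, ∏ i ∈ p, f i ≤ (∑ i ∈ s, f i) ^ 2 := by
  rw [two_mul_sum_powersetCard_two]
  linarith [sum_nonneg fun i (_ : i ∈ s) => sq_nonneg (f i)]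

lemma card_mul_two_mul_sum_powersetCard_two_le (s : Finset ι) (f : ι → ℝ) :
    #s * (2 * ∑ p ∈ s.powersetCard 2, ∏ i ∈ p, f i) ≤ (#s - 1) * (∑ i ∈ s, f i) ^ 2 := by
  rw [two_mul_sum_powersetCard_two]
  linarith [sq_sum_le_card_mul_sum_sq (s := s) (f := f)]

lemma sum_sum_powersetCard_erase {M : Type*} [AddCommMonoid M] (s : Finset ι) (k : ℕ)
    (g : Finset ι → M) :
    ∑ x ∈ s, ∑ p ∈ (s.erase x).powersetCard k, g p = (#s - k) • ∑ p ∈ s.powersetCard k, g p := by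
  rw [sum_comm' (t' := s.powersetCard k) (s' := fun p => s \ p), smul_sum]
  · refine sum_congr rfl fun p hp => ?_
    rw [sum_const, card_sdiff_of_subset (mem_powersetCard.1 hp).1, (mem_powersetCard.1 hp).2]
  · intro x p
    simp only [mem_powersetCard, mem_sdiff, subset_erase]
    tauto

end Finset

namespace HyperGraph

variable {G : HyperGraph} {w : ℕ → ℝ} {A : Finset ℕ}

lemma IsWeighting.le_one (hw : G.IsWeighting w) {i : ℕ} (hi : i ∈ G.verts) : w i ≤ 1 :=
  hw.2 ▸ single_le_sum (fun j _ => hw.1 j) hi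

lemma lagrangianAt_congr {w' : ℕ → ℝ} (h : ∀ i ∈ G.verts, w i = w' i) :
    G.lagrangianAt w = G.lagrangianAt w' :=
  sum_congr rfl fun e he => prod_congr rfl fun i hi => h i (G.edge_sub e he hi)

lemma bddAbove_lagrangianAt :
    BddAbove {x : ℝ | ∃ w : ℕ → ℝ, G.IsWeighting w ∧ x = G.lagrangianAt w} := by
  refine ⟨#G.edges, ?_⟩
  rintro _ ⟨w, hw, rfl⟩
  calc G.lagrangianAt w ≤ ∑ _e ∈ G.edges, (1 : ℝ) :=
        sum_le_sum fun e he =>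
          prod_le_one (fun i _ => hw.1 i) fun i hi => hw.le_one (G.edge_sub e he hi)
    _ = #G.edges := by simp

lemma IsWeighting.lagrangianAt_le (hw : G.IsWeighting w) : G.lagrangianAt w ≤ G.lagrangian :=
  le_csSup bddAbove_lagrangianAt ⟨w, hw, rfl⟩

/-- The Lagrangian is attained: `λ(G, ·)` is continuous on the compact simplex over `V(G)`. -/
lemma exists_isWeighting_lagrangianAt_eq (h : G.verts.Nonempty) :
    ∃ w, G.IsWeighting w ∧ G.lagrangianAt w = G.lagrangian := by
  let extend : (G.verts → ℝ) → ℕ → ℝ := fun f i => if hi : i ∈ G.verts then f ⟨i, hi⟩ else 0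
  have hcont : Continuous fun f => G.lagrangianAt (extend f) := by
    have : Continuous extend := continuous_pi fun i => by
      by_cases hi : i ∈ G.verts <;> simp only [extend, hi, dite_true, dite_false] <;> fun_prop
    unfold lagrangianAt
    fun_prop
  have hweighting : ∀ f ∈ stdSimplex ℝ G.verts, G.IsWeighting (extend f) := by
    intro f hf
    refine ⟨fun i => ?_, ?_⟩
    · by_cases hi : i ∈ G.verts <;> simp [extend, hi, hf.1]
    · rw [← sum_coe_sort G.verts]
      simpa [extend] using hf.2
  obtain ⟨v, hv⟩ := h
  obtain ⟨f, hf, hmax⟩ := (isCompact_stdSimplex ℝ G.verts).exists_isMaxOn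
    ⟨_, single_mem_stdSimplex ℝ ⟨v, hv⟩⟩ hcont.continuousOn
  refine ⟨extend f, hweighting f hf, le_antisymm (hweighting f hf).lagrangianAt_le ?_⟩
  refine csSup_le ⟨_, extend f, hweighting f hf, rfl⟩ ?_
  rintro _ ⟨w, hw, rfl⟩
  have hrestrict : (fun i : G.verts => w i) ∈ stdSimplex ℝ G.verts :=
    ⟨fun i => hw.1 i, (sum_coe_sort G.verts w).trans hw.2⟩
  calc G.lagrangianAt w = G.lagrangianAt (extend fun i => w i) :=
        lagrangianAt_congr fun i hi => by simp [extend, hi]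
    _ ≤ G.lagrangianAt (extend f) := hmax hrestrict

/-- Deleting a vertex of weight `0` does not lower the Lagrangian. -/
lemma IsDense.pos_of_lagrangianAt_eq (hd : G.IsDense) (hw : G.IsWeighting w)
    (hopt : G.lagrangianAt w = G.lagrangian) {v : ℕ} (hv : v ∈ G.verts) : 0 < w v := by
  refine (hw.1 v).lt_of_ne' fun hv0 => ?_
  set H := G.induce (G.verts.erase v)
  have hH : H.IsProperSubgraph G := by
    refine ⟨⟨erase_subset _ _, filter_subset _ _⟩, fun h => ?_⟩
    have : v ∈ H.verts := h ▸ hv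
    simp [H, induce] at this
  have hwH : H.IsWeighting w := ⟨hw.1, (sum_erase _ hv0).trans hw.2⟩
  have hlag : H.lagrangianAt w = G.lagrangianAt w := by
    refine sum_subset (filter_subset _ _) fun e he heH => ?_
    obtain ⟨i, hie, hi⟩ := not_subset.1 fun hsub => heH (mem_filter.2 ⟨he, hsub⟩)
    have : i = v := by_contra fun hiv => hi (mem_erase.2 ⟨hiv, G.edge_sub e he hie⟩)
    exact prod_eq_zero hie (this ▸ hv0)
  exact (hd H hH).not_ge (hopt ▸ hlag ▸ hwH.lagrangianAt_le)

def lagrangianDeriv (G : HyperGraph) (w : ℕ → ℝ) (u : ℕ) : ℝ :=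
  ∑ e ∈ G.edges with u ∈ e, ∏ i ∈ e.erase u, w i

lemma sum_mul_lagrangianDeriv (w c : ℕ → ℝ) :
    ∑ u ∈ G.verts, c u * G.lagrangianDeriv w u =
      ∑ e ∈ G.edges, ∑ u ∈ e, c u * ∏ i ∈ e.erase u, w i := by
  simp_rw [lagrangianDeriv, mul_sum, sum_filter]
  rw [sum_comm]
  refine sum_congr rfl fun e he => ?_
  rw [sum_ite_mem, inter_eq_right.2 (G.edge_sub e he)]

lemma IsUniform.sum_mul_lagrangianDeriv {r : ℕ} (hr : G.IsUniform r) (w : ℕ → ℝ) :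
    ∑ u ∈ G.verts, w u * G.lagrangianDeriv w u = r * G.lagrangianAt w := by
  rw [HyperGraph.sum_mul_lagrangianDeriv, lagrangianAt, mul_sum]
  refine sum_congr rfl fun e he => ?_
  rw [sum_congr rfl fun u hu => mul_prod_erase e w hu, sum_const, hr e he, nsmul_eq_mul]

lemma hasDerivAt_lagrangianAt_add_smul (w c : ℕ → ℝ) :
    HasDerivAt (fun t : ℝ => G.lagrangianAt (w + t • c))
      (∑ u ∈ G.verts, c u * G.lagrangianDeriv w u) 0 := by
  rw [sum_mul_lagrangianDeriv]
  refine HasDerivAt.fun_sum fun e _ => ?_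
  have := HasDerivAt.fun_finsetProd (u := e) (x := (0 : ℝ)) (f := fun i t => w i + t * c i)
    fun i _ => ((hasDerivAt_id 0).mul_const (c i)).const_add (w i)
  simpa [mul_comm] using this

/-- Fermat's theorem along `t ↦ w + t • (e_u - e_v)`, a weighting for `0 ≤ t ≤ w v`. -/
lemma lagrangianDeriv_le_of_pos (hw : G.IsWeighting w) (hopt : G.lagrangianAt w = G.lagrangian)
    {u v : ℕ} (hu : u ∈ G.verts) (hv : v ∈ G.verts) (hpos : 0 < w v) :
    G.lagrangianDeriv w u ≤ G.lagrangianDeriv w v := by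
  set c : ℕ → ℝ := Pi.single u 1 - Pi.single v 1
  have hmax : IsLocalMaxOn (fun t : ℝ => G.lagrangianAt (w + t • c)) (Set.Icc 0 (w v)) 0 := by
    refine IsMaxOn.localize fun t ht => ?_
    simp only [Set.mem_ofPred_eq, zero_smul, add_zero, hopt]
    refine IsWeighting.lagrangianAt_le ⟨fun i => ?_, ?_⟩
    · have := hw.1 i
      simp only [c, Pi.add_apply, Pi.smul_apply, Pi.sub_apply, smul_eq_mul, Pi.single_apply]
      split_ifs with hiu hiv <;> subst_vars <;> linarith [ht.1, ht.2]
    · simp [c, sum_add_distrib, sum_sub_distrib, ← mul_sum, hu, hv, hw.2]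
  have hc : ∑ i ∈ G.verts, c i * G.lagrangianDeriv w i =
      G.lagrangianDeriv w u - G.lagrangianDeriv w v := by
    simp [c, sub_mul, sum_sub_distrib, Pi.single_apply, hu, hv]
  have hone : (1 : ℝ) ∈ posTangentConeAt (Set.Icc 0 (w v)) 0 := by
    rw [one_mem_posTangentConeAt_iff_frequently]
    exact (Filter.Eventually.frequently (Ioo_mem_nhdsGT hpos)).mono
      fun t ht => Set.Ioo_subset_Icc_self ht
  have := hmax.hasFDerivWithinAt_nonpos
    (hasDerivAt_lagrangianAt_add_smul w c).hasFDerivAt.hasFDerivWithinAt hone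
  simpa [hc] using this

lemma IsDense.lagrangianDeriv_eq {r : ℕ} (hd : G.IsDense) (hr : G.IsUniform r)
    (hw : G.IsWeighting w) (hopt : G.lagrangianAt w = G.lagrangian) {u : ℕ} (hu : u ∈ G.verts) :
    G.lagrangianDeriv w u = r * G.lagrangian := by
  have hconst : ∀ v ∈ G.verts, G.lagrangianDeriv w v = G.lagrangianDeriv w u := fun v hv =>
    le_antisymm (lagrangianDeriv_le_of_pos hw hopt hv hu (hd.pos_of_lagrangianAt_eq hw hopt hu))
      (lagrangianDeriv_le_of_pos hw hopt hu hv (hd.pos_of_lagrangianAt_eq hw hopt hv))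
  calc G.lagrangianDeriv w u = ∑ v ∈ G.verts, w v * G.lagrangianDeriv w v := by
        rw [sum_congr rfl fun v hv => by rw [hconst v hv], ← sum_mul, hw.2, one_mul]
    _ = r * G.lagrangian := by rw [hr.sum_mul_lagrangianDeriv, hopt]

def IsClique (G : HyperGraph) (r : ℕ) (A : Finset ℕ) : Prop := A.powersetCard r ⊆ G.edges

lemma exists_isClique_of_hasCopy {t r : ℕ} (h : G.HasCopy (completeHyperGraph t r)) :
    ∃ A : Finset ℕ, #A = t ∧ A ⊆ G.verts ∧ G.IsClique r A := by
  obtain ⟨f, hinj, hverts, hedges⟩ := h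
  dsimp only [completeHyperGraph] at hinj hverts hedges
  refine ⟨(Icc 1 t).image f, ?_, fun x hx => ?_, fun e he => ?_⟩
  · simp [card_image_of_injOn hinj]
  · obtain ⟨i, hi, rfl⟩ := mem_image.1 hx
    exact hverts i hi
  · obtain ⟨hsub, hcard⟩ := mem_powersetCard.1 he
    obtain ⟨e', he', rfl⟩ := subset_image_iff.1 hsub
    refine hedges e' (mem_powersetCard.2 ⟨he', ?_⟩)
    rwa [card_image_of_injOn (hinj.mono he')] at hcard

lemma IsClique.mem_edges {A : Finset ℕ} (hA : G.IsClique 3 A) {x y z : ℕ} (hx : x ∈ A)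
    (hy : y ∈ A) (hz : z ∈ A) (hxy : x ≠ y) (hxz : x ≠ z) (hyz : y ≠ z) :
    {x, y, z} ∈ G.edges :=
  hA (mem_powersetCard.2 ⟨by simp [insert_subset_iff, hx, hy, hz], card_eq_three.2
    ⟨x, y, z, hxy, hxz, hyz, rfl⟩⟩)

lemma hasCopy_F5 {a b c d e : ℕ} (hl : [a, b, c, d, e].Nodup) (h₁ : insert c {a, b} ∈ G.edges)
    (h₂ : insert d {a, b} ∈ G.edges) (h₃ : {c, d, e} ∈ G.edges) : G.HasCopy F5 := by
  rw [insert_comm c, pair_comm c] at h₁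
  rw [insert_comm d, pair_comm d] at h₂
  refine ⟨fun n => [a, b, c, d, e].getD (n - 1) 0, fun m hm n hn hmn => ?_, fun v hv => ?_,
    fun s hs => ?_⟩
  · simp only [F5, coe_insert, coe_singleton, Set.mem_insert_iff, Set.mem_singleton_iff] at hm hn
    have hm' : m - 1 < [a, b, c, d, e].length := by simp; omega
    have hn' : n - 1 < [a, b, c, d, e].length := by simp; omega
    simp only [List.getD_eq_getElem _ _ hm', List.getD_eq_getElem _ _ hn',
      hl.getElem_inj_iff] at hmn
    omega
  · simp only [F5, mem_insert, mem_singleton] at hv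
    rcases hv with rfl | rfl | rfl | rfl | rfl
    exacts [G.edge_sub _ h₁ (by simp), G.edge_sub _ h₁ (by simp), G.edge_sub _ h₁ (by simp),
      G.edge_sub _ h₂ (by simp), G.edge_sub _ h₃ (by simp)]
  · simp only [F5, mem_insert, mem_singleton] at hs
    rcases hs with rfl | rfl | rfl <;> simpa

lemma edge_subset_of_free_F5 (hF : G.Free F5) (h3 : G.IsUniform 3) (hA : G.IsClique 3 A)
    (hA4 : 4 ≤ #A) {e : Finset ℕ} (he : e ∈ G.edges) {x y : ℕ} (hx : x ∈ A) (hy : y ∈ A)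
    (hxy : x ≠ y) (hxe : x ∈ e) (hye : y ∈ e) : e ⊆ A := by
  by_contra hsub
  obtain ⟨b, hbe, hbA⟩ := not_subset.1 hsub
  have hxb : x ≠ b := ne_of_mem_of_not_mem hx hbA
  have hyb : y ≠ b := ne_of_mem_of_not_mem hy hbA
  have he' : {x, y, b} = e := eq_of_subset_of_card_le (by simp [insert_subset_iff, *])
    (by rw [h3 e he, card_eq_three.2 ⟨x, y, b, hxy, hxb, hyb, rfl⟩])
  have hrest : 1 < #(A \ {x, y}) := by
    have := le_card_sdiff {x, y} A
    have := card_le_two (a := x) (b := y)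
    omega
  obtain ⟨k, hk, l, hl, hkl⟩ := one_lt_card.1 hrest
  simp only [mem_sdiff, mem_insert, mem_singleton, not_or] at hk hl
  refine hF (hasCopy_F5 (a := k) (b := l) ?_ (hA.mem_edges hx hk.1 hl.1 ?_ ?_ hkl)
    (hA.mem_edges hy hk.1 hl.1 ?_ ?_ hkl) (he' ▸ he))
  · simp only [List.nodup_cons, List.mem_cons, List.not_mem_nil]
    grind [ne_of_mem_of_not_mem]
  all_goals grind

lemma eq_of_insert_mem_edges_of_free_F5 (hF : G.Free F5) (hA : G.IsClique 3 A) (hA3 : 3 ≤ #A)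
    {p : Finset ℕ} (hp : #p = 2) (hpA : Disjoint p A) {x y : ℕ} (hx : x ∈ A) (hy : y ∈ A)
    (hxp : insert x p ∈ G.edges) (hyp : insert y p ∈ G.edges) : x = y := by
  by_contra hxy
  obtain ⟨b, c, hbc, rfl⟩ := card_eq_two.1 hp
  have hrest : 0 < #(A \ {x, y}) := by
    have := le_card_sdiff {x, y} A
    have := card_le_two (a := x) (b := y)
    omega
  obtain ⟨z, hz⟩ := card_pos.1 hrest
  simp only [mem_sdiff, mem_insert, mem_singleton, not_or] at hz
  simp only [disjoint_insert_left, disjoint_singleton_left] at hpA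
  refine hF (hasCopy_F5 (e := z) ?_ hxp hyp (hA.mem_edges hx hy hz.1 hxy ?_ ?_))
  · simp only [List.nodup_cons, List.mem_cons, List.not_mem_nil]
    grind [ne_of_mem_of_not_mem]
  all_goals grind

def link (G : HyperGraph) (x : ℕ) : Finset (Finset ℕ) :=
  {e ∈ G.edges | x ∈ e}.image (·.erase x)

lemma insert_mem_edges_of_mem_link {x : ℕ} {p : Finset ℕ} (hp : p ∈ G.link x) :
    insert x p ∈ G.edges ∧ x ∉ p := by
  obtain ⟨e, he, rfl⟩ := mem_image.1 hp
  obtain ⟨he, hxe⟩ := mem_filter.1 he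
  exact ⟨(insert_erase hxe).symm ▸ he, notMem_erase x e⟩

lemma lagrangianDeriv_eq_sum_link (w : ℕ → ℝ) (x : ℕ) :
    G.lagrangianDeriv w x = ∑ p ∈ G.link x, ∏ i ∈ p, w i := by
  refine (sum_image (f := fun p => ∏ i ∈ p, w i) fun e he e' he' h => ?_).symm
  rw [← insert_erase (mem_filter.1 he).2, ← insert_erase (mem_filter.1 he').2]
  exact congrArg (insert x) h

lemma lagrangianDeriv_le_of_free_F5 (hF : G.Free F5) (h3 : G.IsUniform 3) (hA : G.IsClique 3 A)
    (hA4 : 4 ≤ #A) (hw : ∀ i, 0 ≤ w i) {x : ℕ} (hx : x ∈ A) :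
    G.lagrangianDeriv w x ≤ ∑ p ∈ (A.erase x).powersetCard 2, ∏ i ∈ p, w i +
      ∑ p ∈ G.link x with Disjoint p A, ∏ i ∈ p, w i := by
  rw [lagrangianDeriv_eq_sum_link, ← sum_filter_not_add_sum_filter _ fun p => Disjoint p A]
  refine add_le_add ?_ le_rfl
  refine sum_le_sum_of_subset_of_nonneg (fun p hp => ?_) fun _ _ _ => prod_nonneg fun i _ => hw i
  obtain ⟨hp, hpA⟩ := mem_filter.1 hp
  obtain ⟨hedge, hxp⟩ := insert_mem_edges_of_mem_link hp
  obtain ⟨y, hyp, hyA⟩ := not_disjoint_iff.1 hpA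
  have hsub := edge_subset_of_free_F5 hF h3 hA hA4 hedge hx hyA (ne_of_mem_of_not_mem hyp hxp).symm
    (mem_insert_self x p) (mem_insert_of_mem hyp)
  have hcard := h3 _ hedge
  rw [card_insert_of_notMem hxp] at hcard
  exact mem_powersetCard.2 ⟨subset_erase.2 ⟨(subset_insert x p).trans hsub, hxp⟩, by omega⟩

lemma sum_sum_link_disjoint_le (hF : G.Free F5) (h3 : G.IsUniform 3) (hA : G.IsClique 3 A)
    (hA3 : 3 ≤ #A) (hw : ∀ i, 0 ≤ w i) :
    ∑ x ∈ A, ∑ p ∈ G.link x with Disjoint p A, ∏ i ∈ p, w i ≤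
      ∑ p ∈ (G.verts \ A).powersetCard 2, ∏ i ∈ p, w i := by
  rw [← sum_biUnion]
  · refine sum_le_sum_of_subset_of_nonneg (fun p hp => ?_)
      fun _ _ _ => prod_nonneg fun i _ => hw i
    obtain ⟨x, -, hp⟩ := mem_biUnion.1 hp
    obtain ⟨hp, hpA⟩ := mem_filter.1 hp
    obtain ⟨hedge, hxp⟩ := insert_mem_edges_of_mem_link hp
    have hcard := h3 _ hedge
    rw [card_insert_of_notMem hxp] at hcard
    refine mem_powersetCard.2 ⟨fun i hi => mem_sdiff.2 ⟨?_, disjoint_left.1 hpA hi⟩, ?_⟩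
    · exact G.edge_sub _ hedge (mem_insert_of_mem hi)
    · omega
  · intro x hx y hy hxy
    refine disjoint_left.2 fun p hpx hpy => hxy ?_
    obtain ⟨hpx, hpA⟩ := mem_filter.1 hpx
    obtain ⟨hedge, hxp⟩ := insert_mem_edges_of_mem_link hpx
    have hcard := h3 _ hedge
    rw [card_insert_of_notMem hxp] at hcard
    exact eq_of_insert_mem_edges_of_free_F5 hF hA hA3 (by omega) hpA hx hy hedge
      (insert_mem_edges_of_mem_link (mem_filter.1 hpy).1).1

lemma sum_lagrangianDeriv_le_of_free_F5 (hF : G.Free F5) (h3 : G.IsUniform 3)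
    (hA : G.IsClique 3 A) (hA4 : 4 ≤ #A) (hw : ∀ i, 0 ≤ w i) :
    ∑ x ∈ A, G.lagrangianDeriv w x ≤
      (#A - 2) • ∑ p ∈ A.powersetCard 2, ∏ i ∈ p, w i +
        ∑ p ∈ (G.verts \ A).powersetCard 2, ∏ i ∈ p, w i := by
  calc ∑ x ∈ A, G.lagrangianDeriv w x
      ≤ ∑ x ∈ A, (∑ p ∈ (A.erase x).powersetCard 2, ∏ i ∈ p, w i +
          ∑ p ∈ G.link x with Disjoint p A, ∏ i ∈ p, w i) :=
        sum_le_sum fun x hx => lagrangianDeriv_le_of_free_F5 hF h3 hA hA4 hw hx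
    _ ≤ _ := by
      rw [sum_add_distrib, sum_sum_powersetCard_erase]
      gcongr
      exact sum_sum_link_disjoint_le hF h3 hA (by omega) hw

end HyperGraph

/-- a dense `F_5`-free 3-graph containing a copy of `K_4^3` has
`λ(G) ≤ 1/16`. -/
theorem dense_F5_free_with_K4 (G : HyperGraph) (h3 : G.IsUniform 3) (hd : G.IsDense)
    (hfree : G.Free F5) (hK4 : G.HasCopy (completeHyperGraph 4 3)) :
    G.lagrangian ≤ 1 / 16 := by
  obtain ⟨A, hA4, hAG, hA⟩ := exists_isClique_of_hasCopy hK4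
  obtain ⟨w, hw, hopt⟩ := exists_isWeighting_lagrangianAt_eq ((card_pos.1 (by omega)).mono hAG)
  have key := sum_lagrangianDeriv_le_of_free_F5 hfree h3 hA hA4.ge hw.1
  rw [sum_congr rfl fun x hx => hd.lagrangianDeriv_eq h3 hw hopt (hAG hx), sum_const, hA4] at key
  have hinside := card_mul_two_mul_sum_powersetCard_two_le A w
  have houtside := two_mul_sum_powersetCard_two_le_sq (G.verts \ A) w
  have htotal := (sum_sdiff hAG).trans hw.2
  rw [hA4] at hinside
  have hα := sum_nonneg fun i (_ : i ∈ A) => hw.1 i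
  have hβ := sum_nonneg fun i (_ : i ∈ G.verts \ A) => hw.1 i
  norm_num at key hinside
  nlinarith [mul_nonneg hα hβ]
end

section
/- Let t ≥ 3 and let G be a dense, C_t^3-free 3-graph which is a good graph to a set A ⊆ V(G), with good pairs {a_1,b_1},…,{a_s,b_s} partitioning V(G)∖A, and suppose the induced subgraph G[A] contains K_{2t−2}^{3−}. If λ(G[A]) ≤ λ(K_{2t−1}^3), then λ(G) ≤ λ(K_{2t−1}^3), and equality λ(G) = λ(K_{2t−1}^3) holds if and only if V(G) = A and λ(G[A]) = λ(K_{2t−1}^3). -/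
open Finset

open HyperGraph

namespace HyperGraph

theorem ext' {G H : HyperGraph} (hv : G.verts = H.verts) (he : G.edges = H.edges) : G = H := by
  cases G; cases H; simp_all

lemma weight_le_one {G : HyperGraph} {w : ℕ → ℝ} (hw : G.IsWeighting w) {i : ℕ}
    (hi : i ∈ G.verts) : w i ≤ 1 := by
  have h := Finset.single_le_sum (f := w) (fun j _ => hw.1 j) hi
  linarith [hw.2]

lemma lagSet_bddAbove (G : HyperGraph) :
    BddAbove {x : ℝ | ∃ w : ℕ → ℝ, G.IsWeighting w ∧ x = G.lagrangianAt w} := by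
  refine ⟨G.edges.card, ?_⟩
  rintro x ⟨w, hw, rfl⟩
  have : ∀ e ∈ G.edges, ∏ i ∈ e, w i ≤ 1 := by
    intro e he
    exact Finset.prod_le_one (fun i _ => hw.1 i)
      (fun i hi => weight_le_one hw (G.edge_sub e he hi))
  calc G.lagrangianAt w ≤ ∑ _e ∈ G.edges, (1:ℝ) := Finset.sum_le_sum this
  _ = G.edges.card := by simp

lemma lagrangianAt_le_lagrangian (G : HyperGraph) {w : ℕ → ℝ} (hw : G.IsWeighting w) :
    G.lagrangianAt w ≤ G.lagrangian :=
  le_csSup (lagSet_bddAbove G) ⟨w, hw, rfl⟩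

lemma exists_max_weighting (G : HyperGraph) (hV : G.verts.Nonempty) :
    ∃ w : ℕ → ℝ, G.IsWeighting w ∧ (∀ i ∉ G.verts, w i = 0) ∧
      G.lagrangian = G.lagrangianAt w := by
  classical
  set K : Set (ℕ → ℝ) := {w | (∀ i, w i ∈ Set.Icc (0:ℝ) 1) ∧ (∀ i ∉ G.verts, w i = 0) ∧
    ∑ i ∈ G.verts, w i = 1} with hK
  have hKsub : K ⊆ Set.pi Set.univ (fun _ => Set.Icc (0:ℝ) 1) := by
    intro w hw i _; exact hw.1 i
  have hKclosed : IsClosed K := by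
    have h1 : IsClosed {w : ℕ → ℝ | ∀ i, w i ∈ Set.Icc (0:ℝ) 1} := by
      have : {w : ℕ → ℝ | ∀ i, w i ∈ Set.Icc (0:ℝ) 1} =
          Set.pi Set.univ (fun _ => Set.Icc (0:ℝ) 1) := by
        ext w
        simp only [Set.mem_setOf_eq, Set.mem_pi, Set.mem_univ, forall_true_left, Set.mem_Icc]
      rw [this]
      exact isClosed_set_pi (fun i _ => isClosed_Icc)
    have h2 : IsClosed {w : ℕ → ℝ | ∀ i ∉ G.verts, w i = 0} := by
      have : {w : ℕ → ℝ | ∀ i ∉ G.verts, w i = 0} =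
          ⋂ i ∈ {i | i ∉ G.verts}, {w : ℕ → ℝ | w i = 0} := by
        ext w; simp
      rw [this]
      exact isClosed_biInter (fun i _ => isClosed_eq (continuous_apply i) continuous_const)
    have h3 : IsClosed {w : ℕ → ℝ | ∑ i ∈ G.verts, w i = 1} :=
      isClosed_eq (by continuity) continuous_const
    have : K = {w : ℕ → ℝ | ∀ i, w i ∈ Set.Icc (0:ℝ) 1} ∩
        ({w | ∀ i ∉ G.verts, w i = 0} ∩ {w | ∑ i ∈ G.verts, w i = 1}) := by
      ext w; simp [hK, and_assoc]
    rw [this]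
    exact h1.inter (h2.inter h3)
  have hKcompact : IsCompact K :=
    IsCompact.of_isClosed_subset (isCompact_univ_pi (fun _ => isCompact_Icc)) hKclosed hKsub
  obtain ⟨v0, hv0⟩ := hV
  have hKne : K.Nonempty := by
    refine ⟨fun i => if i = v0 then 1 else 0, ?_, ?_, ?_⟩
    · intro i; by_cases h : i = v0 <;> simp [h]
    · intro i hi
      have hne : i ≠ v0 := fun h => hi (by rw [h]; exact hv0)
      simp [hne]
    · simp [Finset.sum_ite_eq' G.verts v0, hv0]
  have hcont : Continuous (G.lagrangianAt) := by
    unfold lagrangianAt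
    exact continuous_finset_sum _ (fun e _ => continuous_finset_prod _
      (fun i _ => continuous_apply i))
  obtain ⟨w, hwK, hmax⟩ := hKcompact.exists_isMaxOn hKne hcont.continuousOn
  have hwWeight : G.IsWeighting w := ⟨fun i => (hwK.1 i).1, hwK.2.2⟩
  refine ⟨w, hwWeight, hwK.2.1, le_antisymm ?_ (lagrangianAt_le_lagrangian G hwWeight)⟩
  refine csSup_le ⟨G.lagrangianAt w, w, hwWeight, rfl⟩ ?_
  rintro x ⟨w', hw', rfl⟩
  have h1 : G.lagrangianAt w' = G.lagrangianAt (fun i => if i ∈ G.verts then w' i else 0) := by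
    refine Finset.sum_congr rfl (fun e he => Finset.prod_congr rfl (fun i hi => ?_))
    exact (if_pos (G.edge_sub e he hi)).symm
  have h2 : (fun i => if i ∈ G.verts then w' i else 0) ∈ K := by
    refine ⟨fun i => ?_, fun i hi => if_neg hi, ?_⟩
    · by_cases h : i ∈ G.verts
      · simp only [if_pos h]; exact ⟨hw'.1 i, weight_le_one hw' h⟩
      · simp [h]
    · rw [← hw'.2]; exact Finset.sum_congr rfl (fun i hi => if_pos hi)
  rw [h1]
  exact hmax h2

lemma dense_pos {G : HyperGraph} (hd : G.IsDense) {w : ℕ → ℝ} (hw : G.IsWeighting w)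
    (hopt : G.lagrangian = G.lagrangianAt w) {v : ℕ} (hv : v ∈ G.verts) : 0 < w v := by
  by_contra h
  push_neg at h
  have hv0 : w v = 0 := le_antisymm h (hw.1 v)
  set H := G.induce (G.verts.erase v) with hH
  have hne : H ≠ G := by
    intro hEq
    have : v ∈ H.verts := hEq ▸ hv
    simp [hH, induce] at this
  have hsub : H.IsProperSubgraph G :=
    ⟨⟨Finset.erase_subset _ _, Finset.filter_subset _ _⟩, hne⟩
  have hwH : H.IsWeighting w := by
    refine ⟨hw.1, ?_⟩
    show ∑ i ∈ G.verts.erase v, w i = 1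
    rw [Finset.sum_erase _ hv0, hw.2]
  have heq : H.lagrangianAt w = G.lagrangianAt w := by
    show ∑ e ∈ G.edges.filter (fun e => e ⊆ G.verts.erase v), ∏ i ∈ e, w i
      = ∑ e ∈ G.edges, ∏ i ∈ e, w i
    rw [← Finset.sum_filter_add_sum_filter_not G.edges (fun e => e ⊆ G.verts.erase v)]
    have : ∑ e ∈ G.edges.filter (fun e => ¬ e ⊆ G.verts.erase v), ∏ i ∈ e, w i = 0 := by
      apply Finset.sum_eq_zero
      intro e he
      rw [Finset.mem_filter] at he
      have hvin : v ∈ e := by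
        by_contra hvn
        exact he.2 ((Finset.subset_erase).mpr ⟨G.edge_sub e he.1, hvn⟩)
      exact Finset.prod_eq_zero hvin hv0
    linarith
  have h1 : G.lagrangian ≤ H.lagrangian := by
    rw [hopt, ← heq]
    exact lagrangianAt_le_lagrangian H hwH
  exact absurd (hd H hsub) (not_lt.mpr h1)

end HyperGraph

lemma complete_lb (t : ℕ) (ht : 3 ≤ t) :
    (2:ℝ)/25 ≤ (completeHyperGraph (2*t - 1) 3).lagrangian := by
  classical
  set w0 : ℕ → ℝ := fun i => if i ∈ Finset.Icc 1 5 then (1/5 : ℝ) else 0 with hw0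
  have hsub5 : Finset.Icc 1 5 ⊆ Finset.Icc 1 (2*t - 1) :=
    Finset.Icc_subset_Icc le_rfl (by omega)
  have hw : (completeHyperGraph (2*t - 1) 3).IsWeighting w0 := by
    constructor
    · intro i; simp only [hw0]; split <;> norm_num
    · show ∑ i ∈ Finset.Icc 1 (2*t-1), w0 i = 1
      simp only [hw0]
      rw [Finset.sum_ite_mem, Finset.inter_eq_right.mpr hsub5]
      simp [Nat.card_Icc]
  refine le_trans ?_ (lagrangianAt_le_lagrangian _ hw)
  show (2:ℝ)/25 ≤ ∑ e ∈ (Finset.Icc 1 (2*t-1)).powersetCard 3, ∏ i ∈ e, w0 i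
  have hsubP : (Finset.Icc 1 5).powersetCard 3 ⊆ (Finset.Icc 1 (2*t-1)).powersetCard 3 :=
    Finset.powersetCard_mono hsub5
  have hmono : ∑ e ∈ (Finset.Icc 1 5).powersetCard 3, ∏ i ∈ e, w0 i
      ≤ ∑ e ∈ (Finset.Icc 1 (2*t-1)).powersetCard 3, ∏ i ∈ e, w0 i := by
    apply Finset.sum_le_sum_of_subset_of_nonneg hsubP
    intro e _ _
    apply Finset.prod_nonneg
    intro i _
    simp only [hw0]; split <;> norm_num
  refine le_trans ?_ hmono
  have hval : ∀ e ∈ (Finset.Icc 1 5).powersetCard 3, ∏ i ∈ e, w0 i = (1/5:ℝ)^3 := by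
    intro e he
    rw [Finset.mem_powersetCard] at he
    rw [Finset.prod_congr rfl (fun i hi => by simp only [hw0]; rw [if_pos (he.1 hi)])]
    rw [Finset.prod_const, he.2]
  rw [Finset.sum_congr rfl hval, Finset.sum_const, Finset.card_powersetCard]
  have : Nat.choose 5 3 = 10 := by decide
  rw [Nat.card_Icc]
  norm_num [this]

lemma no_three_pairs (t : ℕ) (ht : 3 ≤ t) (G : HyperGraph)
    (hfree : G.Free (linearCycle t))
    (A : Finset ℕ) (hA : A ⊆ G.verts)
    (g : ℕ → ℕ) (hg1 : Set.InjOn g ↑(Finset.Icc 1 (2*t-2)))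
    (hg2 : ∀ x ∈ Finset.Icc 1 (2*t-2), g x ∈ A)
    (hgE : ∀ x y w : ℕ, x ∈ Finset.Icc 2 (2*t-2) → y ∈ Finset.Icc 2 (2*t-2) →
      w ∈ Finset.Icc 2 (2*t-2) → x ≠ y → x ≠ w → y ≠ w →
      ({g x, g y, g w} : Finset ℕ) ∈ G.edges)
    (u pu v z pz : ℕ)
    (hmu : u ∈ G.verts) (hmpu : pu ∈ G.verts) (hmv : v ∈ G.verts)
    (hmz : z ∈ G.verts) (hmpz : pz ∈ G.verts)
    (hnAu : u ∉ A) (hnApu : pu ∉ A) (hnAv : v ∉ A) (hnAz : z ∉ A) (hnApz : pz ∉ A)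
    (hd01 : u ≠ pu) (hd02 : u ≠ v) (hd03 : u ≠ z) (hd04 : u ≠ pz)
    (hd12 : pu ≠ v) (hd13 : pu ≠ z) (hd14 : pu ≠ pz)
    (hd23 : v ≠ z) (hd24 : v ≠ pz) (hd34 : z ≠ pz)
    (hu : ∀ k ∈ A, ({u, pu, k} : Finset ℕ) ∈ G.edges)
    (hz : ∀ k ∈ A, ({z, pz, k} : Finset ℕ) ∈ G.edges)
    (he : ({u, v, z} : Finset ℕ) ∈ G.edges) : False := by
  classical
  set F : ℕ → ℕ := fun n => if n = 1 then g 2 else if n = 2 then pu else if n = 3 then u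
    else if n = 4 then v else if n = 5 then z else if n = 6 then pz else g (n - 4) with hF
  have hF1 : F 1 = g 2 := by norm_num [hF]
  have hF2 : F 2 = pu := by norm_num [hF]
  have hF3 : F 3 = u := by norm_num [hF]
  have hF4 : F 4 = v := by norm_num [hF]
  have hF5 : F 5 = z := by norm_num [hF]
  have hF6 : F 6 = pz := by norm_num [hF]
  have hF7 : ∀ n, 7 ≤ n → F n = g (n - 4) := by
    intro n hn
    simp only [hF]
    rw [if_neg (by omega : ¬ n = 1), if_neg (by omega : ¬ n = 2),
      if_neg (by omega : ¬ n = 3), if_neg (by omega : ¬ n = 4),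
      if_neg (by omega : ¬ n = 5), if_neg (by omega : ¬ n = 6)]
  apply hfree
  refine ⟨F, ?_, ?_, ?_⟩
  · -- injectivity
    intro m hm n hn hmn
    have hm' : 1 ≤ m ∧ m ≤ 2*t := by
      simpa [linearCycle, Finset.mem_Icc] using hm
    have hn' : 1 ≤ n ∧ n ≤ 2*t := by
      simpa [linearCycle, Finset.mem_Icc] using hn
    have hcm : m = 1 ∨ m = 2 ∨ m = 3 ∨ m = 4 ∨ m = 5 ∨ m = 6 ∨ (7 ≤ m ∧ m ≤ 2*t) := by omega
    have hcn : n = 1 ∨ n = 2 ∨ n = 3 ∨ n = 4 ∨ n = 5 ∨ n = 6 ∨ (7 ≤ n ∧ n ≤ 2*t) := by omega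
    rcases hcm with rfl | rfl | rfl | rfl | rfl | rfl | hm7 <;>
      rcases hcn with rfl | rfl | rfl | rfl | rfl | rfl | hn7
    all_goals try rw [hF7 m hm7.1] at hmn
    all_goals try rw [hF7 n hn7.1] at hmn
    all_goals try simp only [hF1, hF2, hF3, hF4, hF5, hF6] at hmn
    · -- case (1, 1)
      rfl
    · -- case (1, 2)
      exact absurd (hmn ▸ hg2 2 (Finset.mem_Icc.mpr (by omega))) hnApu
    · -- case (1, 3)
      exact absurd (hmn ▸ hg2 2 (Finset.mem_Icc.mpr (by omega))) hnAu
    · -- case (1, 4)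
      exact absurd (hmn ▸ hg2 2 (Finset.mem_Icc.mpr (by omega))) hnAv
    · -- case (1, 5)
      exact absurd (hmn ▸ hg2 2 (Finset.mem_Icc.mpr (by omega))) hnAz
    · -- case (1, 6)
      exact absurd (hmn ▸ hg2 2 (Finset.mem_Icc.mpr (by omega))) hnApz
    · -- case (1, big)
      have h := hg1 (Finset.mem_coe.mpr (Finset.mem_Icc.mpr (by omega))) (Finset.mem_coe.mpr (Finset.mem_Icc.mpr (by omega))) hmn
      omega
    · -- case (2, 1)
      exact absurd (hmn.symm ▸ hg2 2 (Finset.mem_Icc.mpr (by omega))) hnApu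
    · -- case (2, 2)
      rfl
    · -- case (2, 3)
      exact absurd hmn.symm hd01
    · -- case (2, 4)
      exact absurd hmn hd12
    · -- case (2, 5)
      exact absurd hmn hd13
    · -- case (2, 6)
      exact absurd hmn hd14
    · -- case (2, big)
      exact absurd (hmn.symm ▸ hg2 (n-4) (Finset.mem_Icc.mpr (by omega))) hnApu
    · -- case (3, 1)
      exact absurd (hmn.symm ▸ hg2 2 (Finset.mem_Icc.mpr (by omega))) hnAu
    · -- case (3, 2)
      exact absurd hmn hd01
    · -- case (3, 3)
      rfl
    · -- case (3, 4)
      exact absurd hmn hd02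
    · -- case (3, 5)
      exact absurd hmn hd03
    · -- case (3, 6)
      exact absurd hmn hd04
    · -- case (3, big)
      exact absurd (hmn.symm ▸ hg2 (n-4) (Finset.mem_Icc.mpr (by omega))) hnAu
    · -- case (4, 1)
      exact absurd (hmn.symm ▸ hg2 2 (Finset.mem_Icc.mpr (by omega))) hnAv
    · -- case (4, 2)
      exact absurd hmn.symm hd12
    · -- case (4, 3)
      exact absurd hmn.symm hd02
    · -- case (4, 4)
      rfl
    · -- case (4, 5)
      exact absurd hmn hd23
    · -- case (4, 6)
      exact absurd hmn hd24
    · -- case (4, big)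
      exact absurd (hmn.symm ▸ hg2 (n-4) (Finset.mem_Icc.mpr (by omega))) hnAv
    · -- case (5, 1)
      exact absurd (hmn.symm ▸ hg2 2 (Finset.mem_Icc.mpr (by omega))) hnAz
    · -- case (5, 2)
      exact absurd hmn.symm hd13
    · -- case (5, 3)
      exact absurd hmn.symm hd03
    · -- case (5, 4)
      exact absurd hmn.symm hd23
    · -- case (5, 5)
      rfl
    · -- case (5, 6)
      exact absurd hmn hd34
    · -- case (5, big)
      exact absurd (hmn.symm ▸ hg2 (n-4) (Finset.mem_Icc.mpr (by omega))) hnAz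
    · -- case (6, 1)
      exact absurd (hmn.symm ▸ hg2 2 (Finset.mem_Icc.mpr (by omega))) hnApz
    · -- case (6, 2)
      exact absurd hmn.symm hd14
    · -- case (6, 3)
      exact absurd hmn.symm hd04
    · -- case (6, 4)
      exact absurd hmn.symm hd24
    · -- case (6, 5)
      exact absurd hmn.symm hd34
    · -- case (6, 6)
      rfl
    · -- case (6, big)
      exact absurd (hmn.symm ▸ hg2 (n-4) (Finset.mem_Icc.mpr (by omega))) hnApz
    · -- case (big, 1)
      have h := hg1 (Finset.mem_coe.mpr (Finset.mem_Icc.mpr (by omega))) (Finset.mem_coe.mpr (Finset.mem_Icc.mpr (by omega))) hmn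
      omega
    · -- case (big, 2)
      exact absurd (hmn ▸ hg2 (m-4) (Finset.mem_Icc.mpr (by omega))) hnApu
    · -- case (big, 3)
      exact absurd (hmn ▸ hg2 (m-4) (Finset.mem_Icc.mpr (by omega))) hnAu
    · -- case (big, 4)
      exact absurd (hmn ▸ hg2 (m-4) (Finset.mem_Icc.mpr (by omega))) hnAv
    · -- case (big, 5)
      exact absurd (hmn ▸ hg2 (m-4) (Finset.mem_Icc.mpr (by omega))) hnAz
    · -- case (big, 6)
      exact absurd (hmn ▸ hg2 (m-4) (Finset.mem_Icc.mpr (by omega))) hnApz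
    · -- case (big, big)
      have h := hg1 (Finset.mem_coe.mpr (Finset.mem_Icc.mpr (by omega))) (Finset.mem_coe.mpr (Finset.mem_Icc.mpr (by omega))) hmn
      omega
  · -- maps to verts
    intro n hn
    have hn' : 1 ≤ n ∧ n ≤ 2*t := by
      simpa [linearCycle, Finset.mem_Icc] using hn
    have hcn : n = 1 ∨ n = 2 ∨ n = 3 ∨ n = 4 ∨ n = 5 ∨ n = 6 ∨ (7 ≤ n ∧ n ≤ 2*t) := by omega
    rcases hcn with rfl | rfl | rfl | rfl | rfl | rfl | hn7
    · rw [hF1]; exact hA (hg2 2 (Finset.mem_Icc.mpr (by omega)))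
    · rw [hF2]; exact hmpu
    · rw [hF3]; exact hmu
    · rw [hF4]; exact hmv
    · rw [hF5]; exact hmz
    · rw [hF6]; exact hmpz
    · rw [hF7 n hn7.1]; exact hA (hg2 (n-4) (Finset.mem_Icc.mpr (by omega)))
  · -- edges
    intro e he'
    have hP := (Finset.mem_filter.mp he').2
    have himg : ∀ x y w : ℕ, ({x, y, w} : Finset ℕ).image F = {F x, F y, F w} := by
      intro x y w
      simp [Finset.image_insert]
    rcases hP with ⟨k, hk, rfl⟩ | rfl
    · have hck : k = 0 ∨ k = 1 ∨ k = 2 ∨ (3 ≤ k ∧ k ≤ t - 2) := by omega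
      rcases hck with rfl | rfl | rfl | hk3
      · -- edge {1,2,3} ↦ {g 2, pu, u}
        norm_num [himg, hF1, hF2, hF3]
        have heq : ({g 2, pu, u} : Finset ℕ) = {u, pu, g 2} := by
          ext x; simp; tauto
        rw [heq]
        exact hu (g 2) (hg2 2 (Finset.mem_Icc.mpr (by omega)))
      · -- edge {3,4,5} ↦ {u, v, z}
        norm_num [himg, hF3, hF4, hF5]
        exact he
      · -- edge {5,6,7} ↦ {z, pz, g 3}
        norm_num [himg, hF5, hF6, hF7 7 (by omega)]
        exact hz (g 3) (hg2 3 (Finset.mem_Icc.mpr (by omega)))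
      · -- generic clique edge
        rw [himg, hF7 (2*k+1) (by omega), hF7 (2*k+2) (by omega), hF7 (2*k+3) (by omega)]
        exact hgE (2*k+1-4) (2*k+2-4) (2*k+3-4)
          (Finset.mem_Icc.mpr (by omega)) (Finset.mem_Icc.mpr (by omega))
          (Finset.mem_Icc.mpr (by omega)) (by omega) (by omega) (by omega)
    · -- closing edge {2t-1, 2t, 1}
      rcases (by omega : t = 3 ∨ 4 ≤ t) with rfl | ht4
      · norm_num [himg, hF5, hF6, hF1]
        exact hz (g 2) (hg2 2 (Finset.mem_Icc.mpr (by omega)))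
      · rw [himg, hF7 (2*t-1) (by omega), hF7 (2*t) (by omega), hF1]
        exact hgE (2*t-1-4) (2*t-4) 2
          (Finset.mem_Icc.mpr (by omega)) (Finset.mem_Icc.mpr (by omega))
          (Finset.mem_Icc.mpr (by omega)) (by omega) (by omega) (by omega)

/-- let `t ≥ 3` and let `G` be a dense `C_t^3`-free 3-graph which is a
good graph to `A ⊆ V(G)` and such that `G[A]` contains `K_{2t-2}^{3-}`.  If
`λ(G[A]) ≤ λ(K_{2t-1}^3)` then `λ(G) ≤ λ(K_{2t-1}^3)`, with equality iff `V(G) = A`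
and `λ(G[A]) = λ(K_{2t-1}^3)`. -/
theorem good_graph_lagrangian (t : ℕ) (ht : 3 ≤ t) (G : HyperGraph)
    (h3 : G.IsUniform 3) (hd : G.IsDense) (hfree : G.Free (linearCycle t))
    (A : Finset ℕ) (hA : A ⊆ G.verts) (hgood : G.IsGoodGraph A)
    (hKm : (G.induce A).HasCopy (completeMinus (2 * t - 2)))
    (hlam : (G.induce A).lagrangian ≤ (completeHyperGraph (2 * t - 1) 3).lagrangian) :
    G.lagrangian ≤ (completeHyperGraph (2 * t - 1) 3).lagrangian ∧
      (G.lagrangian = (completeHyperGraph (2 * t - 1) 3).lagrangian ↔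
        (G.verts = A ∧
          (G.induce A).lagrangian = (completeHyperGraph (2 * t - 1) 3).lagrangian)) := by
  classical
  obtain ⟨s, a, b, hAV, hVA, hdisj, hpairs⟩ := hgood
  obtain ⟨g, hg1', hg2', hg3⟩ := hKm
  set L := (completeHyperGraph (2*t - 1) 3).lagrangian with hLdef
  have hL25 : (2:ℝ)/25 ≤ L := complete_lb t ht
  have hg1 : Set.InjOn g ↑(Finset.Icc 1 (2*t-2)) := hg1'
  have hg2 : ∀ x ∈ Finset.Icc 1 (2*t-2), g x ∈ A := fun x hx => hg2' x hx
  have hgE : ∀ x y q : ℕ, x ∈ Finset.Icc 2 (2*t-2) → y ∈ Finset.Icc 2 (2*t-2) →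
      q ∈ Finset.Icc 2 (2*t-2) → x ≠ y → x ≠ q → y ≠ q →
      ({g x, g y, g q} : Finset ℕ) ∈ G.edges := by
    intro x y q hx hy hq hxy hxq hyq
    rw [Finset.mem_Icc] at hx hy hq
    have hS : ({x, y, q} : Finset ℕ) ∈ (completeMinus (2*t-2)).edges := by
      simp only [completeMinus, Finset.mem_filter, Finset.mem_powersetCard]
      refine ⟨⟨?_, ?_⟩, ?_⟩
      · intro r hr
        simp only [Finset.mem_insert, Finset.mem_singleton] at hr
        rw [Finset.mem_Icc]
        rcases hr with rfl | rfl | rfl <;> omega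
      · rw [Finset.card_insert_of_notMem (by simp [hxy, hxq]),
          Finset.card_insert_of_notMem (by simp [hyq]), Finset.card_singleton]
      · intro hEq
        have h1 : (1:ℕ) ∈ ({x, y, q} : Finset ℕ) := by rw [hEq]; simp
        simp only [Finset.mem_insert, Finset.mem_singleton] at h1
        omega
    have himg := hg3 _ hS
    rw [Finset.image_insert, Finset.image_insert, Finset.image_singleton] at himg
    exact (Finset.mem_filter.mp himg).1
  have hAne : A.Nonempty := ⟨g 1, hg2 1 (Finset.mem_Icc.mpr (by omega))⟩
  have hVne : G.verts.Nonempty := ⟨g 1, hA (hg2 1 (Finset.mem_Icc.mpr (by omega)))⟩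
  have hpe : ∀ i ∈ Finset.Icc 1 s, ∀ k ∈ A, ({a i, b i, k} : Finset ℕ) ∈ G.edges := by
    intro i hi k hk
    have h1 := ((hpairs i hi).2.2.2.2.2 k hk).1
    have hb : b i ∈ G.link2 (a i) k := by rw [h1]; exact Set.mem_singleton _
    have hb' : ({a i, k, b i} : Finset ℕ) ∈ G.edges := hb
    have heq : ({a i, k, b i} : Finset ℕ) = {a i, b i, k} := by
      ext q; simp only [Finset.mem_insert, Finset.mem_singleton]; tauto
    rwa [heq] at hb'
  have hpd : ∀ i ∈ Finset.Icc 1 s, ∀ j ∈ Finset.Icc 1 s, i ≠ j →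
      ∀ q, (q = a i ∨ q = b i) → ∀ r, (r = a j ∨ r = b j) → q ≠ r := by
    intro i hi j hj hij q hq r hr hqr
    have h1 : q ∈ ({a i, b i} : Finset ℕ) ∩ {a j, b j} := by
      rw [Finset.mem_inter]
      constructor
      · simp only [Finset.mem_insert, Finset.mem_singleton]; exact hq
      · simp only [Finset.mem_insert, Finset.mem_singleton]; rw [hqr]; exact hr
    rw [hdisj i hi j hj hij] at h1
    exact absurd h1 (Finset.notMem_empty q)
  by_cases hVA' : G.verts = A
  · have hGA : G.induce A = G := by
      apply HyperGraph.ext'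
      · exact hVA'.symm
      · show G.edges.filter (fun e => e ⊆ A) = G.edges
        apply Finset.filter_true_of_mem
        intro e he
        rw [← hVA']
        exact G.edge_sub e he
    rw [hGA] at hlam ⊢
    exact ⟨hlam, ⟨fun h => ⟨hVA', h⟩, fun h => h.2⟩⟩
  · -- strict case
    have hssub : A ⊂ G.verts := ssubset_of_subset_of_ne hA (Ne.symm hVA')
    obtain ⟨d0, hd0V, hd0A⟩ := Finset.exists_of_ssubset hssub
    obtain ⟨i0, hi0, hd0⟩ := (hVA d0).mp (Finset.mem_sdiff.mpr ⟨hd0V, hd0A⟩)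
    obtain ⟨w, hw, hw0, hopt⟩ := G.exists_max_weighting hVne
    have hpos : ∀ q ∈ G.verts, 0 < w q := fun q hq => HyperGraph.dense_pos hd hw hopt hq
    set σ := ∑ k ∈ A, w k with hσdef
    have hσpos : 0 < σ := by
      obtain ⟨k0, hk0⟩ := hAne
      exact lt_of_lt_of_le (hpos k0 (hA hk0))
        (Finset.single_le_sum (fun q _ => hw.1 q) hk0)
    -- pair-mass identity
    have hsd : G.verts \ A = (Finset.Icc 1 s).biUnion (fun i => {a i, b i}) := by
      ext q
      rw [hVA q]
      simp only [Finset.mem_biUnion, Finset.mem_insert, Finset.mem_singleton]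
    have hdisj' : (↑(Finset.Icc 1 s) : Set ℕ).PairwiseDisjoint
        (fun i => ({a i, b i} : Finset ℕ)) := by
      intro i hi j hj hij
      exact Finset.disjoint_iff_inter_eq_empty.mpr
        (hdisj i (Finset.mem_coe.mp hi) j (Finset.mem_coe.mp hj) hij)
    have hxσ : σ + ∑ i ∈ Finset.Icc 1 s, (w (a i) + w (b i)) = 1 := by
      have h1 : ∑ q ∈ G.verts \ A, w q + ∑ q ∈ A, w q = ∑ q ∈ G.verts, w q :=
        Finset.sum_sdiff hA
      have h2 : ∑ q ∈ G.verts \ A, w q = ∑ i ∈ Finset.Icc 1 s, (w (a i) + w (b i)) := by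
        rw [hsd, Finset.sum_biUnion hdisj']
        exact Finset.sum_congr rfl (fun i hi => Finset.sum_pair (hpairs i hi).1)
      rw [h2] at h1
      rw [hσdef]
      linarith [hw.2, h1]
    set x := ∑ i ∈ Finset.Icc 1 s, (w (a i) + w (b i)) with hxdef
    have hxpos : 0 < x := by
      have hwd0 : 0 < w d0 := hpos d0 hd0V
      have h1 : 0 < w (a i0) + w (b i0) := by
        rcases hd0 with h | h
        · have := hw.1 (b i0); rw [h] at hwd0; linarith
        · have := hw.1 (a i0); rw [h] at hwd0; linarith
      exact lt_of_lt_of_le h1 (Finset.single_le_sum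
        (fun i _ => add_nonneg (hw.1 (a i)) (hw.1 (b i))) hi0)
    have hσlt1 : σ < 1 := by linarith
    -- edge classification
    have hclass : ∀ e ∈ G.edges, ¬ (e ⊆ A) →
        ∃ i ∈ Finset.Icc 1 s, a i ∈ e ∧ b i ∈ e := by
      intro e he hnsub
      obtain ⟨d, hd1, hd2⟩ := Finset.not_subset.mp hnsub
      have hdV : d ∈ G.verts := G.edge_sub e he hd1
      obtain ⟨i, hi, hdi⟩ := (hVA d).mp (Finset.mem_sdiff.mpr ⟨hdV, hd2⟩)
      obtain ⟨d', hdd', hd'i, hd'link, habd, hd'A, hd'V⟩ :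
          ∃ d', d ≠ d' ∧ (d' = a i ∨ d' = b i) ∧ (∀ k ∈ A, G.link2 d k = {d'}) ∧
            ({a i, b i} : Finset ℕ) = {d, d'} ∧ d' ∉ A ∧ d' ∈ G.verts := by
        rcases hdi with rfl | rfl
        · exact ⟨b i, (hpairs i hi).1, Or.inr rfl,
            fun k hk => ((hpairs i hi).2.2.2.2.2 k hk).1, rfl, (hpairs i hi).2.2.2.2.1,
            (hpairs i hi).2.2.1⟩
        · refine ⟨a i, Ne.symm (hpairs i hi).1, Or.inl rfl,
            fun k hk => ((hpairs i hi).2.2.2.2.2 k hk).2, ?_, (hpairs i hi).2.2.2.1,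
            (hpairs i hi).2.1⟩
          exact Finset.pair_comm (a i) (b i)
      have hdedge : ∀ k ∈ A, ({d, d', k} : Finset ℕ) ∈ G.edges := by
        intro k hk
        have h1 := hpe i hi k hk
        have heq : ({a i, b i, k} : Finset ℕ) = {d, d', k} := by
          have h2 : ∀ q, q ∈ ({a i, b i} : Finset ℕ) ↔ q ∈ ({d, d'} : Finset ℕ) := by
            intro q; rw [habd]
          ext q
          simp only [Finset.mem_insert, Finset.mem_singleton] at h2 ⊢
          rcases h2 q with ⟨h2a, h2b⟩
          constructor
          · rintro (rfl | rfl | rfl)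
            · rcases h2a (Or.inl rfl) with h | h
              · exact Or.inl h
              · exact Or.inr (Or.inl h)
            · rcases h2a (Or.inr rfl) with h | h
              · exact Or.inl h
              · exact Or.inr (Or.inl h)
            · exact Or.inr (Or.inr rfl)
          · rintro (rfl | rfl | rfl)
            · rcases h2b (Or.inl rfl) with h | h
              · exact Or.inl h
              · exact Or.inr (Or.inl h)
            · rcases h2b (Or.inr rfl) with h | h
              · exact Or.inl h
              · exact Or.inr (Or.inl h)
            · exact Or.inr (Or.inr rfl)
        rwa [heq] at h1
      have hdone : d' ∈ e → ∃ i ∈ Finset.Icc 1 s, a i ∈ e ∧ b i ∈ e := by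
        intro hd'e
        refine ⟨i, hi, ?_, ?_⟩
        · have : a i ∈ ({d, d'} : Finset ℕ) := by
            rw [← habd]; simp
          simp only [Finset.mem_insert, Finset.mem_singleton] at this
          rcases this with rfl | rfl
          · exact hd1
          · exact hd'e
        · have : b i ∈ ({d, d'} : Finset ℕ) := by
            rw [← habd]; simp
          simp only [Finset.mem_insert, Finset.mem_singleton] at this
          rcases this with rfl | rfl
          · exact hd1
          · exact hd'e
      -- decompose e
      have hcard2 : (e.erase d).card = 2 := by
        rw [Finset.card_erase_of_mem hd1, h3 e he]
      obtain ⟨y, z', hyz, herase⟩ := Finset.card_eq_two.mp hcard2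
      have hymem : y ∈ e.erase d := by rw [herase]; simp
      have hzmem : z' ∈ e.erase d := by rw [herase]; simp
      have hye : y ∈ e := Finset.mem_of_mem_erase hymem
      have hze : z' ∈ e := Finset.mem_of_mem_erase hzmem
      have hdy : y ≠ d := (Finset.mem_erase.mp hymem).1
      have hdz : z' ≠ d := (Finset.mem_erase.mp hzmem).1
      have heq : e = {d, y, z'} := by
        have h1 := Finset.insert_erase hd1
        rw [herase] at h1
        exact h1.symm
      -- case: some A vertex in e
      by_cases hyA : y ∈ A
      · apply hdone
        have hlk : z' ∈ G.link2 d y := by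
          show ({d, y, z'} : Finset ℕ) ∈ G.edges
          rw [← heq]; exact he
        have hl := hd'link y hyA
        rw [hl] at hlk
        rw [Set.mem_singleton_iff.mp hlk] at hze
        exact hze
      by_cases hzA : z' ∈ A
      · apply hdone
        have hlk : y ∈ G.link2 d z' := by
          show ({d, z', y} : Finset ℕ) ∈ G.edges
          have hpc : ({d, z', y} : Finset ℕ) = {d, y, z'} := by
            rw [Finset.pair_comm z' y]
          rw [hpc, ← heq]; exact he
        have hl := hd'link z' hzA
        rw [hl] at hlk
        rw [Set.mem_singleton_iff.mp hlk] at hye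
        exact hye
      -- all of e outside A
      by_cases hd'y : d' = y
      · exact hdone (hd'y ▸ hye)
      by_cases hd'z : d' = z'
      · exact hdone (hd'z ▸ hze)
      have hyV : y ∈ G.verts := G.edge_sub e he hye
      have hzV : z' ∈ G.verts := G.edge_sub e he hze
      obtain ⟨j, hj, hyj⟩ := (hVA y).mp (Finset.mem_sdiff.mpr ⟨hyV, hyA⟩)
      obtain ⟨l, hl, hzl⟩ := (hVA z').mp (Finset.mem_sdiff.mpr ⟨hzV, hzA⟩)
      have hij : i ≠ j := by
        rintro rfl
        have : y ∈ ({a i, b i} : Finset ℕ) := by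
          simp only [Finset.mem_insert, Finset.mem_singleton]; exact hyj
        rw [habd] at this
        simp only [Finset.mem_insert, Finset.mem_singleton] at this
        rcases this with h | h
        · exact hdy h
        · exact hd'y h.symm
      have hil : i ≠ l := by
        rintro rfl
        have : z' ∈ ({a i, b i} : Finset ℕ) := by
          simp only [Finset.mem_insert, Finset.mem_singleton]; exact hzl
        rw [habd] at this
        simp only [Finset.mem_insert, Finset.mem_singleton] at this
        rcases this with h | h
        · exact hdz h
        · exact hd'z h.symm
      by_cases hjl : j = l
      · subst hjl
        have hfin : a j ∈ e ∧ b j ∈ e := by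
          rcases hyj with h1 | h1 <;> rcases hzl with h2 | h2
          · exact absurd (h1.trans h2.symm) hyz
          · exact ⟨h1 ▸ hye, h2 ▸ hze⟩
          · exact ⟨h2 ▸ hze, h1 ▸ hye⟩
          · exact absurd (h1.trans h2.symm) hyz
        exact ⟨j, hj, hfin⟩
      -- three distinct pairs: contradiction
      exfalso
      obtain ⟨pz', hzpz', hzpzi, hpzA, hpzV⟩ :
          ∃ pz', z' ≠ pz' ∧ (pz' = a l ∨ pz' = b l) ∧ pz' ∉ A ∧ pz' ∈ G.verts := by
        rcases hzl with rfl | rfl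
        · exact ⟨b l, (hpairs l hl).1, Or.inr rfl, (hpairs l hl).2.2.2.2.1,
            (hpairs l hl).2.2.1⟩
        · exact ⟨a l, Ne.symm (hpairs l hl).1, Or.inl rfl, (hpairs l hl).2.2.2.1,
            (hpairs l hl).2.1⟩
      have hzedge : ∀ k ∈ A, ({z', pz', k} : Finset ℕ) ∈ G.edges := by
        intro k hk
        have h1 := hpe l hl k hk
        have heq2 : ({a l, b l, k} : Finset ℕ) = {z', pz', k} := by
          rcases hzl with rfl | rfl <;> rcases hzpzi with rfl | rfl
          · exact absurd rfl hzpz'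
          · rfl
          · exact Finset.insert_comm (a l) (b l) {k}
          · exact absurd rfl hzpz'
        rwa [heq2] at h1
      have hee : ({d, y, z'} : Finset ℕ) ∈ G.edges := heq ▸ he
      exact no_three_pairs t ht G hfree A hA g hg1 hg2 hgE d d' y z' pz'
        hdV hd'V hyV hzV hpzV hd2 hd'A hyA hzA hpzA
        hdd' (Ne.symm hdy) (Ne.symm hdz)
        (hpd i hi l hl hil d hdi pz' hzpzi)
        (hpd i hi j hj hij d' hd'i y hyj)
        (hpd i hi l hl hil d' hd'i z' hzl)
        (hpd i hi l hl hil d' hd'i pz' hzpzi)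
        hyz (hpd j hj l hl hjl y hyj pz' hzpzi) hzpz'
        hdedge hzedge hee
    -- Lagrangian bound
    have hwnn : ∀ q, 0 ≤ w q := hw.1
    have hprodnn : ∀ e : Finset ℕ, 0 ≤ ∏ q ∈ e, w q :=
      fun e => Finset.prod_nonneg (fun q _ => hwnn q)
    have hsplit : G.lagrangian = ∑ e ∈ G.edges.filter (fun e => e ⊆ A), ∏ q ∈ e, w q
        + ∑ e ∈ G.edges.filter (fun e => ¬ e ⊆ A), ∏ q ∈ e, w q := by
      rw [hopt]
      exact (Finset.sum_filter_add_sum_filter_not G.edges (fun e => e ⊆ A) _).symm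
    have hS1 : ∑ e ∈ G.edges.filter (fun e => e ⊆ A), ∏ q ∈ e, w q ≤ σ^3 * L := by
      have hu : (G.induce A).IsWeighting (fun q => w q / σ) := by
        refine ⟨fun q => div_nonneg (hwnn q) hσpos.le, ?_⟩
        show ∑ q ∈ A, w q / σ = 1
        rw [← Finset.sum_div, ← hσdef, div_self hσpos.ne']
      have hfrac : (G.induce A).lagrangianAt (fun q => w q / σ)
          = (∑ e ∈ G.edges.filter (fun e => e ⊆ A), ∏ q ∈ e, w q) / σ^3 := by
        show ∑ e ∈ G.edges.filter (fun e => e ⊆ A), ∏ q ∈ e, (w q / σ) = _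
        rw [Finset.sum_div]
        refine Finset.sum_congr rfl (fun e he => ?_)
        rw [Finset.prod_div_distrib, Finset.prod_const, h3 e (Finset.mem_filter.mp he).1]
      have h1 : (G.induce A).lagrangianAt (fun q => w q / σ) ≤ L :=
        le_trans (HyperGraph.lagrangianAt_le_lagrangian _ hu) hlam
      rw [hfrac, div_le_iff₀ (by positivity)] at h1
      calc ∑ e ∈ G.edges.filter (fun e => e ⊆ A), ∏ q ∈ e, w q ≤ L * σ^3 := h1
        _ = σ^3 * L := mul_comm _ _
    have hS2 : ∑ e ∈ G.edges.filter (fun e => ¬ e ⊆ A), ∏ q ∈ e, w q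
        ≤ ∑ i ∈ Finset.Icc 1 s, (w (a i) + w (b i)) / 16 := by
      have hsubB : G.edges.filter (fun e => ¬ e ⊆ A) ⊆
          (Finset.Icc 1 s).biUnion (fun i => G.edges.filter (fun e => a i ∈ e ∧ b i ∈ e)) := by
        intro e he
        rw [Finset.mem_filter] at he
        obtain ⟨i, hi, h1, h2⟩ := hclass e he.1 he.2
        exact Finset.mem_biUnion.mpr ⟨i, hi, Finset.mem_filter.mpr ⟨he.1, h1, h2⟩⟩
      have hdisjF : (↑(Finset.Icc 1 s) : Set ℕ).PairwiseDisjoint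
          (fun i => G.edges.filter (fun e => a i ∈ e ∧ b i ∈ e)) := by
        intro i hi j hj hij
        refine Finset.disjoint_left.mpr ?_
        intro e he1 he2
        rw [Finset.mem_filter] at he1 he2
        have hi' : i ∈ Finset.Icc 1 s := Finset.mem_coe.mp hi
        have hj' : j ∈ Finset.Icc 1 s := Finset.mem_coe.mp hj
        have hsub4 : ({a i, b i, a j, b j} : Finset ℕ) ⊆ e := by
          intro q hq
          simp only [Finset.mem_insert, Finset.mem_singleton] at hq
          rcases hq with rfl|rfl|rfl|rfl
          exacts [he1.2.1, he1.2.2, he2.2.1, he2.2.2]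
        have haa := hpd i hi' j hj' hij (a i) (Or.inl rfl) (a j) (Or.inl rfl)
        have hab := hpd i hi' j hj' hij (a i) (Or.inl rfl) (b j) (Or.inr rfl)
        have hba := hpd i hi' j hj' hij (b i) (Or.inr rfl) (a j) (Or.inl rfl)
        have hbb := hpd i hi' j hj' hij (b i) (Or.inr rfl) (b j) (Or.inr rfl)
        have habj : a j ≠ b j := (hpairs j hj').1
        have habi : a i ≠ b i := (hpairs i hi').1
        have hn1 : a i ∉ ({b i, a j, b j} : Finset ℕ) := by
          simp only [Finset.mem_insert, Finset.mem_singleton]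
          push_neg
          exact ⟨habi, haa, hab⟩
        have hn2 : b i ∉ ({a j, b j} : Finset ℕ) := by
          simp only [Finset.mem_insert, Finset.mem_singleton]
          push_neg
          exact ⟨hba, hbb⟩
        have hn3 : a j ∉ ({b j} : Finset ℕ) := by
          simp only [Finset.mem_singleton]
          exact habj
        have hc4 : ({a i, b i, a j, b j} : Finset ℕ).card = 4 := by
          rw [Finset.card_insert_of_notMem hn1, Finset.card_insert_of_notMem hn2,
            Finset.card_insert_of_notMem hn3, Finset.card_singleton]
        have hle := Finset.card_le_card hsub4
        rw [hc4, h3 e he1.1] at hle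
        omega
      refine le_trans (le_trans (Finset.sum_le_sum_of_subset_of_nonneg hsubB
        (fun e _ _ => hprodnn e)) (le_of_eq (Finset.sum_biUnion hdisjF)))
        (Finset.sum_le_sum ?_)
      intro i hi
      have habne : a i ≠ b i := (hpairs i hi).1
      have haV : a i ∈ G.verts := (hpairs i hi).2.1
      have hbV : b i ∈ G.verts := (hpairs i hi).2.2.1
      set φ : ℕ → Finset ℕ := fun c => insert (a i) (insert (b i) {c}) with hφ
      have himg : G.edges.filter (fun e => a i ∈ e ∧ b i ∈ e) ⊆
          (G.verts \ {a i, b i}).image φ := by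
        intro e he
        rw [Finset.mem_filter] at he
        have hbmem : b i ∈ e.erase (a i) := Finset.mem_erase.mpr ⟨Ne.symm habne, he.2.2⟩
        have hcard1 : ((e.erase (a i)).erase (b i)).card = 1 := by
          rw [Finset.card_erase_of_mem hbmem, Finset.card_erase_of_mem he.2.1, h3 e he.1]
        obtain ⟨c, hc⟩ := Finset.card_eq_one.mp hcard1
        have hcmem : c ∈ (e.erase (a i)).erase (b i) := by rw [hc]; simp
        have hcb : c ≠ b i := (Finset.mem_erase.mp hcmem).1
        have hca : c ≠ a i := (Finset.mem_erase.mp (Finset.mem_of_mem_erase hcmem)).1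
        have hce : c ∈ e := Finset.mem_of_mem_erase (Finset.mem_of_mem_erase hcmem)
        have heφ : e = φ c := by
          have h1 : insert (b i) ((e.erase (a i)).erase (b i)) = e.erase (a i) :=
            Finset.insert_erase hbmem
          rw [hc] at h1
          have h2 : insert (a i) (e.erase (a i)) = e := Finset.insert_erase he.2.1
          rw [← h1] at h2
          exact h2.symm
        refine Finset.mem_image.mpr ⟨c, Finset.mem_sdiff.mpr
          ⟨G.edge_sub e he.1 hce, ?_⟩, heφ.symm⟩
        simp only [Finset.mem_insert, Finset.mem_singleton]
        push_neg
        exact ⟨hca, hcb⟩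
      have hφinj : ∀ c1 ∈ G.verts \ ({a i, b i} : Finset ℕ),
          ∀ c2 ∈ G.verts \ ({a i, b i} : Finset ℕ), φ c1 = φ c2 → c1 = c2 := by
        intro c1 h1 c2 h2 heq12
        have hm : c1 ∈ φ c2 := heq12 ▸ (by simp [hφ] : c1 ∈ φ c1)
        simp only [hφ, Finset.mem_insert, Finset.mem_singleton] at hm
        rw [Finset.mem_sdiff] at h1
        simp only [Finset.mem_insert, Finset.mem_singleton] at h1
        push_neg at h1
        rcases hm with h | h | h
        · exact absurd h h1.2.1
        · exact absurd h h1.2.2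
        · exact h
      have hprodφ : ∀ c ∈ G.verts \ ({a i, b i} : Finset ℕ),
          ∏ q ∈ φ c, w q = w (a i) * w (b i) * w c := by
        intro c hcm
        rw [Finset.mem_sdiff] at hcm
        simp only [Finset.mem_insert, Finset.mem_singleton] at hcm
        push_neg at hcm
        rw [hφ]
        rw [Finset.prod_insert (by
            simp only [Finset.mem_insert, Finset.mem_singleton]
            push_neg
            exact ⟨habne, Ne.symm hcm.2.1⟩),
          Finset.prod_insert (by
            simp only [Finset.mem_singleton]
            exact Ne.symm hcm.2.2),
          Finset.prod_singleton, mul_assoc]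
      have habsub : ({a i, b i} : Finset ℕ) ⊆ G.verts := by
        intro q hq
        simp only [Finset.mem_insert, Finset.mem_singleton] at hq
        rcases hq with rfl | rfl
        · exact haV
        · exact hbV
      have hsumsd : ∑ q ∈ G.verts \ ({a i, b i} : Finset ℕ), w q
          + (w (a i) + w (b i)) = 1 := by
        have h1 : ∑ q ∈ G.verts \ ({a i, b i} : Finset ℕ), w q
            + ∑ q ∈ ({a i, b i} : Finset ℕ), w q = ∑ q ∈ G.verts, w q :=
          Finset.sum_sdiff habsub
        rw [Finset.sum_pair habne] at h1
        rw [h1, hw.2]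
      have hSnn : 0 ≤ ∑ q ∈ G.verts \ ({a i, b i} : Finset ℕ), w q :=
        Finset.sum_nonneg (fun q _ => hwnn q)
      calc ∑ e ∈ G.edges.filter (fun e => a i ∈ e ∧ b i ∈ e), ∏ q ∈ e, w q
          ≤ ∑ e ∈ (G.verts \ ({a i, b i} : Finset ℕ)).image φ, ∏ q ∈ e, w q :=
            Finset.sum_le_sum_of_subset_of_nonneg himg (fun e _ _ => hprodnn e)
        _ = ∑ c ∈ G.verts \ ({a i, b i} : Finset ℕ), ∏ q ∈ φ c, w q :=
            Finset.sum_image hφinj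
        _ = ∑ c ∈ G.verts \ ({a i, b i} : Finset ℕ), w (a i) * w (b i) * w c :=
            Finset.sum_congr rfl hprodφ
        _ = w (a i) * w (b i) * ∑ c ∈ G.verts \ ({a i, b i} : Finset ℕ), w c := by
            rw [Finset.mul_sum]
        _ ≤ (w (a i) + w (b i)) / 16 := by
            nlinarith [mul_nonneg (add_nonneg (hwnn (a i)) (hwnn (b i)))
                (sq_nonneg (2*(w (a i)) + 2*(w (b i)) - 1)),
              mul_nonneg hSnn (sq_nonneg (w (a i) - w (b i))),
              hwnn (a i), hwnn (b i), hSnn, hsumsd]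
    have hfinal : G.lagrangian < L := by
      have hsum16 : ∑ i ∈ Finset.Icc 1 s, (w (a i) + w (b i))/16 = x/16 := by
        rw [hxdef, Finset.sum_div]
      have hσ3 : σ^3 ≤ σ := by
        nlinarith [mul_nonneg (mul_nonneg hσpos.le (sub_nonneg.mpr hσlt1.le))
          (by linarith : (0:ℝ) ≤ 1 + σ)]
      have hLpos : (0:ℝ) < L := lt_of_lt_of_le (by norm_num) hL25
      have h1 : σ^3 * L ≤ σ * L := mul_le_mul_of_nonneg_right hσ3 hLpos.le
      have h2 : (1 - σ) * (2/25) ≤ (1 - σ) * L :=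
        mul_le_mul_of_nonneg_left hL25 (by linarith)
      rw [hsplit]
      calc ∑ e ∈ G.edges.filter (fun e => e ⊆ A), ∏ q ∈ e, w q
          + ∑ e ∈ G.edges.filter (fun e => ¬ e ⊆ A), ∏ q ∈ e, w q
          ≤ σ^3*L + x/16 := add_le_add hS1 (hS2.trans (le_of_eq hsum16))
        _ < L := by nlinarith [h1, h2]
    refine ⟨hfinal.le, ?_, ?_⟩
    · intro h
      exact absurd h (ne_of_lt hfinal)
    · rintro ⟨h1, _⟩
      exact absurd h1 hVA'
end
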